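/- arXiv:1802.05464 — 3 statements merged into one kernel-verified Lean document; each statement's English description precedes it below -/
import Mathlib

section
/- If φ is a Bernstein function on (0,∞), then the function λ ↦ φ(λ)/λ is completely monotone on (0,∞). -/
open Set MeasureTheory

/-- A function is completely monotone on (0,∞) if it is infinitely differentiable there
and `(-1)^n f^(n)(t) ≥ 0` for all `n` and `t > 0`. -/
def CompletelyMonotone (f : ℝ → ℝ) : Prop :=
  ContDiffOn ℝ (⊤ : ℕ∞) f (Set.Ioi 0) ∧
    ∀ n : ℕ, ∀ t > (0 : ℝ), 0 ≤ (-1 : ℝ) ^ n * iteratedDerivWithin n f (Set.Ioi 0) t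

/-- A Bernstein function on (0,∞): nonnegative, smooth, with completely monotone derivative. -/
def Bernstein (ψ : ℝ → ℝ) : Prop :=
  (∀ t > (0 : ℝ), 0 ≤ ψ t) ∧ ContDiffOn ℝ (⊤ : ℕ∞) ψ (Set.Ioi 0) ∧
    CompletelyMonotone (fun t => derivWithin ψ (Set.Ioi 0) t)

open Filter Finset


lemma iterWithin_eq_iter {f : ℝ → ℝ} {s : Set ℝ} (hs : IsOpen s) (n : ℕ) :
    Set.EqOn (iteratedDerivWithin n f s) (deriv^[n] f) s := by
  induction n with
  | zero => intro x hx; simp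
  | succ n ih =>
    intro x hx
    rw [iteratedDerivWithin_succ, Function.iterate_succ_apply',
      derivWithin_of_isOpen hs hx]
    exact Filter.EventuallyEq.deriv_eq (Filter.eventuallyEq_of_mem (hs.mem_nhds hx) ih)

lemma iter_contDiffOn {f : ℝ → ℝ} (hf : ContDiffOn ℝ (⊤ : ℕ∞) f (Set.Ioi 0)) (n : ℕ) :
    ContDiffOn ℝ (⊤ : ℕ∞) (deriv^[n] f) (Set.Ioi 0) := by
  induction n with
  | zero => exact hf
  | succ n ih =>
    rw [Function.iterate_succ_apply']
    exact ih.deriv_of_isOpen isOpen_Ioi (by simp)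

lemma iter_hasDerivAt {f : ℝ → ℝ} (hf : ContDiffOn ℝ (⊤ : ℕ∞) f (Set.Ioi 0)) (n : ℕ)
    {t : ℝ} (ht : 0 < t) : HasDerivAt (deriv^[n] f) (deriv^[n+1] f t) t := by
  have h := ((iter_contDiffOn hf n).differentiableOn (by simp)).differentiableAt
    (isOpen_Ioi.mem_nhds ht)
  rw [Function.iterate_succ_apply']
  exact h.hasDerivAt

lemma iter_neg (f : ℝ → ℝ) (n : ℕ) :
    deriv^[n] (fun y => -(f y)) = fun y => -(deriv^[n] f y) := by
  induction n with
  | zero => rfl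
  | succ n ih =>
    rw [Function.iterate_succ_apply', Function.iterate_succ_apply', ih]
    funext y
    exact deriv.neg

/-- Taylor polynomial of a completely monotone function lies below the function
(at points to the left of the expansion point). -/
lemma taylor_le (n : ℕ) : ∀ {f : ℝ → ℝ}, ContDiffOn ℝ (⊤ : ℕ∞) f (Set.Ioi 0) →
    (∀ m : ℕ, ∀ t : ℝ, 0 < t → 0 ≤ (-1 : ℝ) ^ m * deriv^[m] f t) →
    ∀ lam ε : ℝ, 0 < ε → ε ≤ lam →
      ∑ k ∈ Finset.range n, deriv^[k] f lam * (ε - lam) ^ k / k.factorial ≤ f ε := by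
  induction n with
  | zero =>
    intro f hf hm lam ε hε hεlam
    simpa using hm 0 ε hε
  | succ n ih =>
    intro f hf hm lam ε hε hεlam
    have hlam : (0:ℝ) < lam := lt_of_lt_of_le hε hεlam
    set F : ℝ → ℝ := fun x =>
      (∑ k ∈ Finset.range (n+1), deriv^[k] f lam * (x - lam) ^ k / k.factorial) - f x with hF
    have hIcc : Set.Icc ε lam ⊆ Set.Ioi 0 := fun x hx => lt_of_lt_of_le hε hx.1
    -- F is antitone on [ε, lam]
    have hcont : ContinuousOn F (Set.Icc ε lam) := by
      apply ContinuousOn.sub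
      · exact (continuousOn_finset_sum _ fun k _ => by fun_prop)
      · exact hf.continuousOn.mono hIcc
    -- derivative of F on the interior
    have hderivF : ∀ x ∈ Set.Ioo ε lam, HasDerivAt F
        ((∑ j ∈ Finset.range n, deriv^[j+1] f lam * (x - lam) ^ j / j.factorial)
          - deriv f x) x := by
      intro x hx
      have hx0 : (0:ℝ) < x := lt_trans hε hx.1
      have hP : HasDerivAt (fun y =>
          ∑ k ∈ Finset.range (n+1), deriv^[k] f lam * (y - lam) ^ k / k.factorial)
          (∑ j ∈ Finset.range n, deriv^[j+1] f lam * (x - lam) ^ j / j.factorial) x := by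
        have h1 : HasDerivAt (fun y =>
            ∑ k ∈ Finset.range (n+1), deriv^[k] f lam * (y - lam) ^ k / k.factorial)
            (∑ k ∈ Finset.range (n+1),
              deriv^[k] f lam * (k * (x - lam) ^ (k-1)) / k.factorial) x := by
          apply HasDerivAt.fun_sum
          intro k _
          have : HasDerivAt (fun y => (y - lam) ^ k) (k * (x - lam) ^ (k-1)) x := by
            simpa using ((hasDerivAt_id x).sub_const lam).fun_pow k
          simpa [mul_div_assoc] using (this.const_mul (deriv^[k] f lam)).div_const k.factorial
        convert h1 using 1
        rw [Finset.sum_range_succ']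
        rw [show (deriv^[0] f lam * ((0:ℕ) * (x - lam) ^ (0-1)) / (Nat.factorial 0) : ℝ) = 0 by
          simp]
        rw [add_zero]
        apply Finset.sum_congr rfl
        intro j _
        have : ((j:ℝ)+1) * (x - lam)^j / (j+1).factorial = (x - lam)^j / j.factorial := by
          rw [Nat.factorial_succ]
          push_cast
          field_simp
        calc deriv^[j+1] f lam * (x - lam) ^ j / j.factorial
            = deriv^[j+1] f lam * (((j:ℝ)+1) * (x - lam)^j / (j+1).factorial) := by
              rw [this]; ring
          _ = deriv^[j+1] f lam * (((j+1:ℕ):ℝ) * (x - lam) ^ (j+1-1)) / (j+1).factorial := by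
              push_cast; ring
      have hfd : HasDerivAt f (deriv^[1] f x) x := iter_hasDerivAt hf 0 hx0
      exact hP.sub hfd
    have hderiv_nonneg : ∀ x ∈ Set.Ioo ε lam, 0 ≤ deriv F x := by
      intro x hx
      have hx0 : (0:ℝ) < x := lt_trans hε hx.1
      rw [(hderivF x hx).deriv]
      rw [sub_nonneg]
      -- apply ih to g = -(deriv f)
      have hg : ContDiffOn ℝ (⊤ : ℕ∞) (fun y => -(deriv f y)) (Set.Ioi 0) :=
        (hf.deriv_of_isOpen isOpen_Ioi (by simp)).neg
      have hgm : ∀ m : ℕ, ∀ t : ℝ, 0 < t → 0 ≤ (-1:ℝ)^m * deriv^[m] (fun y => -(deriv f y)) t := by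
        intro m t ht
        rw [iter_neg]
        have := hm (m+1) t ht
        have hiter : deriv^[m+1] f t = deriv^[m] (deriv f) t := by
          rw [Function.iterate_succ_apply]
        rw [pow_succ] at this
        calc (0:ℝ) ≤ (-1)^m * (-1) * deriv^[m+1] f t := this
          _ = (-1)^m * -(deriv^[m] (deriv f) t) := by
              rw [← hiter]; ring
      have hIH : ∑ k ∈ Finset.range n,
          deriv^[k] (fun y => -(deriv f y)) lam * (x - lam) ^ k / k.factorial
          ≤ -(deriv f x) := by
        simpa using ih hg hgm lam x hx0 (le_of_lt hx.2)
      have hrw : ∀ k, deriv^[k] (fun y => -(deriv f y)) lam = -(deriv^[k+1] f lam) := by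
        intro k
        rw [iter_neg]
        simp [Function.iterate_succ_apply]
      have hsum : ∑ k ∈ Finset.range n,
          deriv^[k] (fun y => -(deriv f y)) lam * (x - lam) ^ k / k.factorial
          = -(∑ k ∈ Finset.range n, deriv^[k+1] f lam * (x - lam) ^ k / k.factorial) := by
        rw [← Finset.sum_neg_distrib]
        exact Finset.sum_congr rfl fun k _ => by rw [hrw]; ring
      rw [hsum] at hIH
      linarith
    have hdiff : DifferentiableOn ℝ F (interior (Set.Icc ε lam)) := by
      rw [interior_Icc]
      intro x hx
      exact ((hderivF x hx).differentiableAt).differentiableWithinAt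
    have hmono : MonotoneOn F (Set.Icc ε lam) := by
      apply monotoneOn_of_deriv_nonneg (convex_Icc ε lam) hcont hdiff
      intro x hx
      rw [interior_Icc] at hx
      exact hderiv_nonneg x hx
    have hεmem : ε ∈ Set.Icc ε lam := ⟨le_refl _, hεlam⟩
    have hlammem : lam ∈ Set.Icc ε lam := ⟨hεlam, le_refl _⟩
    have := hmono hεmem hlammem hεlam
    have hFlam : F lam = 0 := by
      simp only [hF]
      rw [Finset.sum_range_succ']
      simp
    rw [hFlam] at this
    simp only [hF] at this
    linarith

/-- Taylor polynomial of a Bernstein-type function lies above the function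
(at points to the left of the expansion point). -/
lemma taylor_ge {φ : ℝ → ℝ} (hφs : ContDiffOn ℝ (⊤ : ℕ∞) φ (Set.Ioi 0))
    (hb : ∀ m : ℕ, ∀ t : ℝ, 0 < t → 0 ≤ (-1:ℝ)^m * deriv^[m+1] φ t)
    (n : ℕ) (lam ε : ℝ) (hε : 0 < ε) (hεlam : ε ≤ lam) :
    φ ε ≤ ∑ k ∈ Finset.range (n+1), deriv^[k] φ lam * (ε - lam)^k / k.factorial := by
  have hlam : (0:ℝ) < lam := lt_of_lt_of_le hε hεlam
  set F : ℝ → ℝ := fun x =>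
    (∑ k ∈ Finset.range (n+1), deriv^[k] φ lam * (x - lam) ^ k / k.factorial) - φ x with hF
  have hIcc : Set.Icc ε lam ⊆ Set.Ioi 0 := fun x hx => lt_of_lt_of_le hε hx.1
  have hcont : ContinuousOn F (Set.Icc ε lam) := by
    apply ContinuousOn.sub
    · exact (continuousOn_finset_sum _ fun k _ => by fun_prop)
    · exact hφs.continuousOn.mono hIcc
  have hderivF : ∀ x ∈ Set.Ioo ε lam, HasDerivAt F
      ((∑ j ∈ Finset.range n, deriv^[j+1] φ lam * (x - lam) ^ j / j.factorial)
        - deriv φ x) x := by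
    intro x hx
    have hx0 : (0:ℝ) < x := lt_trans hε hx.1
    have hP : HasDerivAt (fun y =>
        ∑ k ∈ Finset.range (n+1), deriv^[k] φ lam * (y - lam) ^ k / k.factorial)
        (∑ j ∈ Finset.range n, deriv^[j+1] φ lam * (x - lam) ^ j / j.factorial) x := by
      have h1 : HasDerivAt (fun y =>
          ∑ k ∈ Finset.range (n+1), deriv^[k] φ lam * (y - lam) ^ k / k.factorial)
          (∑ k ∈ Finset.range (n+1),
            deriv^[k] φ lam * (k * (x - lam) ^ (k-1)) / k.factorial) x := by
        apply HasDerivAt.fun_sum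
        intro k _
        have : HasDerivAt (fun y => (y - lam) ^ k) (k * (x - lam) ^ (k-1)) x := by
          simpa using ((hasDerivAt_id x).sub_const lam).fun_pow k
        simpa [mul_div_assoc] using (this.const_mul (deriv^[k] φ lam)).div_const k.factorial
      convert h1 using 1
      rw [Finset.sum_range_succ']
      rw [show (deriv^[0] φ lam * ((0:ℕ) * (x - lam) ^ (0-1)) / (Nat.factorial 0) : ℝ) = 0 by
        simp]
      rw [add_zero]
      apply Finset.sum_congr rfl
      intro j _
      have : ((j:ℝ)+1) * (x - lam)^j / (j+1).factorial = (x - lam)^j / j.factorial := by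
        rw [Nat.factorial_succ]
        push_cast
        field_simp
      calc deriv^[j+1] φ lam * (x - lam) ^ j / j.factorial
          = deriv^[j+1] φ lam * (((j:ℝ)+1) * (x - lam)^j / (j+1).factorial) := by
            rw [this]; ring
        _ = deriv^[j+1] φ lam * (((j+1:ℕ):ℝ) * (x - lam) ^ (j+1-1)) / (j+1).factorial := by
            push_cast; ring
    have hfd : HasDerivAt φ (deriv^[1] φ x) x := iter_hasDerivAt hφs 0 hx0
    exact hP.sub hfd
  have hderiv_nonpos : ∀ x ∈ Set.Ioo ε lam, deriv F x ≤ 0 := by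
    intro x hx
    have hx0 : (0:ℝ) < x := lt_trans hε hx.1
    rw [(hderivF x hx).deriv, sub_nonpos]
    -- apply taylor_le to g = deriv φ, which is completely monotone
    have hg : ContDiffOn ℝ (⊤ : ℕ∞) (deriv φ) (Set.Ioi 0) := hφs.deriv_of_isOpen isOpen_Ioi (by simp)
    have hgm : ∀ m : ℕ, ∀ t : ℝ, 0 < t → 0 ≤ (-1:ℝ)^m * deriv^[m] (deriv φ) t := by
      intro m t ht
      have : deriv^[m] (deriv φ) t = deriv^[m+1] φ t := by
        rw [Function.iterate_succ_apply]
      rw [this]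
      exact hb m t ht
    have hIH := taylor_le n hg hgm lam x hx0 (le_of_lt hx.2)
    have hsum : ∑ k ∈ Finset.range n, deriv^[k] (deriv φ) lam * (x - lam) ^ k / k.factorial
        = ∑ k ∈ Finset.range n, deriv^[k+1] φ lam * (x - lam) ^ k / k.factorial := by
      apply Finset.sum_congr rfl
      intro k _
      rw [Function.iterate_succ_apply]
    rw [hsum] at hIH
    have hdx : deriv φ x = deriv^[1] φ x := rfl
    rw [hdx]
    exact hIH
  have hdiff : DifferentiableOn ℝ F (interior (Set.Icc ε lam)) := by
    rw [interior_Icc]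
    intro x hx
    exact ((hderivF x hx).differentiableAt).differentiableWithinAt
  have hanti : AntitoneOn F (Set.Icc ε lam) := by
    apply antitoneOn_of_deriv_nonpos (convex_Icc ε lam) hcont hdiff
    intro x hx
    rw [interior_Icc] at hx
    exact hderiv_nonpos x hx
  have := hanti ⟨le_refl _, hεlam⟩ ⟨hεlam, le_refl _⟩ hεlam
  have hFlam : F lam = 0 := by
    simp only [hF]
    rw [Finset.sum_range_succ']
    simp
  rw [hFlam] at this
  simp only [hF] at this
  linarith

/-- Nonnegativity of the "Taylor polynomial at 0" of a Bernstein-type function. -/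
lemma S_nonneg {φ : ℝ → ℝ} (hφs : ContDiffOn ℝ (⊤ : ℕ∞) φ (Set.Ioi 0))
    (h0 : ∀ t : ℝ, 0 < t → 0 ≤ φ t)
    (hb : ∀ m : ℕ, ∀ t : ℝ, 0 < t → 0 ≤ (-1:ℝ)^m * deriv^[m+1] φ t)
    (n : ℕ) (t : ℝ) (ht : 0 < t) :
    0 ≤ ∑ k ∈ Finset.range (n+1), deriv^[k] φ t * (0 - t)^k / k.factorial := by
  set T : ℝ → ℝ := fun x => ∑ k ∈ Finset.range (n+1), deriv^[k] φ t * (x - t)^k / k.factorial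
    with hT
  have hcont : Continuous T := by fun_prop
  have htend : Filter.Tendsto T (nhdsWithin 0 (Set.Ioi 0)) (nhds (T 0)) :=
    (hcont.tendsto 0).mono_left nhdsWithin_le_nhds
  have hev : ∀ᶠ x in nhdsWithin 0 (Set.Ioi 0), 0 ≤ T x := by
    filter_upwards [Ioc_mem_nhdsGT_of_mem ⟨le_refl (0:ℝ), ht⟩] with x hx
    exact le_trans (h0 x hx.1) (taylor_ge hφs hb n t x hx.1 hx.2)
  exact ge_of_tendsto htend hev

/-- Closed formula for the iterated derivatives of `φ t / t`. -/
lemma div_formula {φ : ℝ → ℝ} (hφs : ContDiffOn ℝ (⊤ : ℕ∞) φ (Set.Ioi 0)) :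
    ∀ n : ℕ, ∀ t : ℝ, 0 < t → deriv^[n] (fun s => φ s / s) t =
      (-1:ℝ)^n * n.factorial *
        (∑ k ∈ Finset.range (n+1), (-1:ℝ)^k * t^k * deriv^[k] φ t / k.factorial) / t^(n+1) := by
  intro n
  induction n with
  | zero =>
    intro t ht
    simp
  | succ n ih =>
    intro t ht
    rw [Function.iterate_succ_apply']
    have hev : deriv^[n] (fun s => φ s / s) =ᶠ[nhds t] (fun s =>
        (-1:ℝ)^n * n.factorial *
          (∑ k ∈ Finset.range (n+1), (-1:ℝ)^k * s^k * deriv^[k] φ s / k.factorial) / s^(n+1)) := by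
      filter_upwards [isOpen_Ioi.mem_nhds ht] with s hs
      exact ih s hs
    rw [hev.deriv_eq]
    -- derivative of the sum (telescoping)
    set v : ℕ → ℝ := fun k => match k with
      | 0 => 0
      | j+1 => (-1:ℝ)^j * t^j * deriv^[j+1] φ t / j.factorial with hv
    have hterm : ∀ k ∈ Finset.range (n+1), HasDerivAt
        (fun s => (-1:ℝ)^k * s^k * deriv^[k] φ s / k.factorial) (v (k+1) - v k) t := by
      intro k _
      have hprod : HasDerivAt (fun s => s^k * deriv^[k] φ s)
          ((k:ℝ) * t^(k-1) * deriv^[k] φ t + t^k * deriv^[k+1] φ t) t := by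
        have h1 : HasDerivAt (fun s : ℝ => s^k) ((k:ℝ) * t^(k-1)) t := hasDerivAt_pow k t
        have h2 : HasDerivAt (deriv^[k] φ) (deriv^[k+1] φ t) t := iter_hasDerivAt hφs k ht
        exact h1.mul h2
      have h3 := (hprod.const_mul ((-1:ℝ)^k)).div_const (k.factorial : ℝ)
      have heq : (-1:ℝ)^k * ((k:ℝ) * t^(k-1) * deriv^[k] φ t + t^k * deriv^[k+1] φ t)
          / k.factorial = v (k+1) - v k := by
        match k with
        | 0 => simp [hv]
        | j+1 =>
          simp only [hv]
          have hfac : ((j+1).factorial : ℝ) = ((j:ℝ)+1) * j.factorial := by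
            rw [Nat.factorial_succ]; push_cast; ring
          have hj : (j.factorial : ℝ) ≠ 0 := Nat.cast_ne_zero.mpr (Nat.factorial_ne_zero j)
          have hj1 : ((j:ℝ)+1) ≠ 0 := by positivity
          rw [hfac]
          rw [pow_succ (-1:ℝ) j]
          push_cast
          field_simp
          ring
      rw [heq] at h3
      have hfun : (fun s => (-1:ℝ)^k * s^k * deriv^[k] φ s / k.factorial)
          = fun x => (-1:ℝ) ^ k * (x ^ k * deriv^[k] φ x) / k.factorial := by
        funext s; ring
      rw [hfun]; exact h3
    have hS : HasDerivAt (fun s =>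
        ∑ k ∈ Finset.range (n+1), (-1:ℝ)^k * s^k * deriv^[k] φ s / k.factorial)
        ((-1:ℝ)^n * t^n * deriv^[n+1] φ t / n.factorial) t := by
      have := HasDerivAt.fun_sum hterm
      have hsum : ∑ k ∈ Finset.range (n+1), (v (k+1) - v k) = v (n+1) - v 0 :=
        Finset.sum_range_sub v (n+1)
      rw [hsum] at this
      simpa [hv] using this
    have hq : HasDerivAt (fun s : ℝ => s^(n+1)) (((n:ℝ)+1) * t^n) t := by
      simpa using hasDerivAt_pow (n+1) t
    have htne : t^(n+1) ≠ 0 := pow_ne_zero _ (ne_of_gt ht)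
    have hdiv := ((hS.const_mul ((-1:ℝ)^n * n.factorial)).fun_div hq htne)
    rw [hdiv.deriv]
    -- algebra
    have hfac : ((n+1).factorial : ℝ) = ((n:ℝ)+1) * n.factorial := by
      rw [Nat.factorial_succ]; push_cast; ring
    have hn : (n.factorial : ℝ) ≠ 0 := Nat.cast_ne_zero.mpr (Nat.factorial_ne_zero n)
    have htne' : t ≠ 0 := ne_of_gt ht
    conv_rhs => rw [Finset.sum_range_succ]
    generalize hA : ∑ k ∈ Finset.range (n+1), (-1:ℝ)^k * t^k * deriv^[k] φ t / (k.factorial:ℝ) = A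
    generalize hB : deriv^[n+1] φ t = B
    rw [hfac, pow_succ (-1:ℝ) n]
    field_simp
    ring_nf

theorem bernstein_div_id_cm {φ : ℝ → ℝ} (hφ : Bernstein φ) :
    CompletelyMonotone (fun t => φ t / t) := by
  obtain ⟨h0, hφs, hcm, hcd⟩ := hφ
  -- translate the complete monotonicity of the derivative into plain iterated derivatives
  have hb : ∀ m : ℕ, ∀ t : ℝ, 0 < t → 0 ≤ (-1:ℝ)^m * deriv^[m+1] φ t := by
    intro m t ht
    have h1 := hcd m t ht
    have heq : Set.EqOn (fun t => derivWithin φ (Set.Ioi 0) t) (deriv φ) (Set.Ioi 0) :=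
      fun x hx => derivWithin_of_isOpen isOpen_Ioi hx
    have h2 : iteratedDerivWithin m (fun t => derivWithin φ (Set.Ioi 0) t) (Set.Ioi 0) t
        = deriv^[m+1] φ t := by
      rw [iteratedDerivWithin_congr heq ht,
        iterWithin_eq_iter isOpen_Ioi m ht, Function.iterate_succ_apply]
    rwa [h2] at h1
  constructor
  · exact hφs.div contDiffOn_id (fun x hx => ne_of_gt hx)
  · intro n t ht
    rw [iterWithin_eq_iter isOpen_Ioi n ht, div_formula hφs n t ht]
    have hS : 0 ≤ ∑ k ∈ Finset.range (n+1), (-1:ℝ)^k * t^k * deriv^[k] φ t / k.factorial := by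
      have := S_nonneg hφs (fun s hs => h0 s hs) hb n t ht
      convert this using 2 with k hk
      rw [zero_sub, neg_pow]
      ring
    have hc : (-1:ℝ)^n * (-1:ℝ)^n = 1 := by
      rw [← pow_add]
      exact Even.neg_one_pow ⟨n, by ring⟩
    have hpos : (0:ℝ) < t^(n+1) := pow_pos ht _
    have : (-1:ℝ)^n * ((-1:ℝ)^n * n.factorial *
        (∑ k ∈ Finset.range (n+1), (-1:ℝ)^k * t^k * deriv^[k] φ t / k.factorial) / t^(n+1))
        = n.factorial * (∑ k ∈ Finset.range (n+1),
            (-1:ℝ)^k * t^k * deriv^[k] φ t / k.factorial) / t^(n+1) := by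
      calc _
          = ((-1:ℝ)^n * (-1:ℝ)^n) * (n.factorial *
            (∑ k ∈ Finset.range (n+1), (-1:ℝ)^k * t^k * deriv^[k] φ t / k.factorial) / t^(n+1)) := by ring
        _ = _ := by rw [hc]; ring
    rw [this]
    positivity
end

section
/- Let Ω be a measure space and (λ_n) a sequence with λ_n ≥ λ₁ > 0. Suppose F ∈ L²(0,T; ℓ²) with components F_n, and v_n : (0,T) → ℝ are nonnegative with ∫₀^T v_n(t)dt ≤ 1/λ_n. Then the functions w_n(t) = ∫₀^t v_n(t-τ)F_n(τ)dτ satisfy Σ_n λ_n² ‖w_n‖²_{L²(0,T)} ≤ Σ_n ‖F_n‖²_{L²(0,T)}. -/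
/-!
Mode by mode, `w_n` is the convolution on `ℝ` of the extensions by zero of `v_n` and `F_n`
off `(0, T]`, so Young's inequality `‖φ ⋆ ψ‖₂ ≤ ‖φ‖₁ ‖ψ‖₂` gives
`‖w_n‖₂ ≤ (∫ v_n) ‖F_n‖₂`, and `λ_n ∫ v_n ≤ 1`. For these exponents Young's inequality is
Cauchy–Schwarz against the weight `φ (x - ·)` followed by Tonelli, both marginals of the kernel
`φ (x - y)` having total mass `‖φ‖₁` by translation invariance.
-/

open MeasureTheory intervalIntegral Set
open scoped ENNReal

theorem sq_lintegral_mul_le_lintegral_mul_lintegral_mul_sq {α : Type*} [MeasurableSpace α]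
    (μ : Measure α) {k f : α → ℝ≥0∞} (hk : AEMeasurable k μ) (hf : AEMeasurable f μ) :
    (∫⁻ x, k x * f x ∂μ) ^ 2 ≤ (∫⁻ x, k x ∂μ) * ∫⁻ x, k x * f x ^ 2 ∂μ := by
  have sq_sqrt (a : ℝ≥0∞) : (a ^ (1 / 2 : ℝ)) ^ (2 : ℝ) = a := by
    rw [← ENNReal.rpow_mul]; norm_num
  have sqrt_mul_sqrt (a b : ℝ≥0∞) : a ^ (1 / 2 : ℝ) * (a ^ (1 / 2 : ℝ) * b) = a * b := by
    rw [← mul_assoc, ← ENNReal.rpow_add_of_nonneg _ _ (by norm_num) (by norm_num)]; norm_num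
  have holder := ENNReal.lintegral_mul_le_Lp_mul_Lq μ .two_two (hk.pow_const (1 / 2 : ℝ))
    ((hk.pow_const (1 / 2 : ℝ)).mul hf)
  simp only [sq_sqrt, sqrt_mul_sqrt, Pi.mul_apply, ENNReal.mul_rpow_of_nonneg _ _ zero_le_two]
    at holder
  calc (∫⁻ x, k x * f x ∂μ) ^ 2
      ≤ ((∫⁻ x, k x ∂μ) ^ (1 / 2 : ℝ) * (∫⁻ x, k x * f x ^ (2 : ℝ) ∂μ) ^ (1 / 2 : ℝ)) ^ 2 := by
        gcongr
    _ = (∫⁻ x, k x ∂μ) * ∫⁻ x, k x * f x ^ 2 ∂μ := by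
        rw [mul_pow, ← ENNReal.rpow_natCast, ← ENNReal.rpow_natCast, ← ENNReal.rpow_mul,
          ← ENNReal.rpow_mul]
        norm_num

section Young

variable {G : Type*} [MeasurableSpace G] [AddCommGroup G] [MeasurableAdd₂ G] [MeasurableNeg G]
  (μ : Measure G) [SFinite μ] [μ.IsAddLeftInvariant] [μ.IsNegInvariant]

theorem lintegral_sq_convolution_le {φ ψ : G → ℝ≥0∞} (hφ : AEMeasurable φ μ)
    (hψ : AEMeasurable ψ μ) :
    ∫⁻ x, (∫⁻ y, φ (x - y) * ψ y ∂μ) ^ 2 ∂μ ≤ (∫⁻ x, φ x ∂μ) ^ 2 * ∫⁻ y, ψ y ^ 2 ∂μ := by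
  have hkernel : AEMeasurable (Function.uncurry fun x y => φ (x - y) * ψ y ^ 2) (μ.prod μ) :=
    (hφ.comp_quasiMeasurePreserving (quasiMeasurePreserving_sub μ μ)).mul
      (hψ.comp_snd.pow_const 2)
  have hφ_sub_right (y : G) : AEMeasurable (fun x => φ (x - y)) μ :=
    hφ.comp_quasiMeasurePreserving (measurePreserving_sub_right μ y).quasiMeasurePreserving
  calc ∫⁻ x, (∫⁻ y, φ (x - y) * ψ y ∂μ) ^ 2 ∂μ
      ≤ ∫⁻ x, (∫⁻ x, φ x ∂μ) * ∫⁻ y, φ (x - y) * ψ y ^ 2 ∂μ ∂μ := by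
        refine lintegral_mono fun x => ?_
        rw [← lintegral_sub_left_eq_self φ x]
        exact sq_lintegral_mul_le_lintegral_mul_lintegral_mul_sq μ
          (hφ.comp_quasiMeasurePreserving (quasiMeasurePreserving_sub_left μ x)) hψ
    _ = (∫⁻ x, φ x ∂μ) * ∫⁻ y, ∫⁻ x, φ (x - y) * ψ y ^ 2 ∂μ ∂μ := by
        rw [← lintegral_lintegral_swap hkernel]
        exact lintegral_const_mul'' _ hkernel.lintegral_prod_right'
    _ = (∫⁻ x, φ x ∂μ) * ∫⁻ y, (∫⁻ x, φ x ∂μ) * ψ y ^ 2 ∂μ := by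
        congr 1
        refine lintegral_congr fun y => ?_
        rw [lintegral_mul_const'' _ (hφ_sub_right y), lintegral_sub_right_eq_self φ y]
    _ = (∫⁻ x, φ x ∂μ) ^ 2 * ∫⁻ y, ψ y ^ 2 ∂μ := by
        rw [lintegral_const_mul'' _ (hψ.pow_const 2), sq, mul_assoc]

end Young

theorem enorm_intervalIntegral_convolution_le {T t : ℝ} (ht : t ∈ Ioc 0 T) (v F : ℝ → ℝ) :
    ‖∫ τ in 0..t, v (t - τ) * F τ‖ₑ ≤
      ∫⁻ τ, (Ioc 0 T).indicator (‖v ·‖ₑ) (t - τ) * (Ioc 0 T).indicator (‖F ·‖ₑ) τ := by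
  rw [integral_of_le ht.1.le]
  calc ‖∫ τ in Ioc 0 t, v (t - τ) * F τ‖ₑ
      ≤ ∫⁻ τ in Ioc 0 t, ‖v (t - τ) * F τ‖ₑ := enorm_integral_le_lintegral_enorm _
    -- at `τ = t` the shifted indicator of `v` vanishes, so only `Ioo 0 t` matches
    _ = ∫⁻ τ in Ioo 0 t, ‖v (t - τ) * F τ‖ₑ := by rw [Measure.restrict_congr_set Ioo_ae_eq_Ioc]
    _ = ∫⁻ τ in Ioo 0 t,
          (Ioc 0 T).indicator (‖v ·‖ₑ) (t - τ) * (Ioc 0 T).indicator (‖F ·‖ₑ) τ := by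
        refine setLIntegral_congr_fun measurableSet_Ioo fun τ ⟨hτ₀, hτt⟩ => ?_
        rw [enorm_mul, indicator_of_mem (by constructor <;> linarith [ht.2]),
          indicator_of_mem (by constructor <;> linarith [ht.2])]
    _ ≤ _ := setLIntegral_le_lintegral _ _

theorem lintegral_indicator_enorm_eq_ofReal_integral {α : Type*} [MeasurableSpace α]
    {μ : Measure α} {s : Set α} (hs : MeasurableSet s) {f : α → ℝ}
    (hf_nonneg : ∀ x ∈ s, 0 ≤ f x) (hf : IntegrableOn f s μ) :
    ∫⁻ x, s.indicator (‖f ·‖ₑ) x ∂μ = ENNReal.ofReal (∫ x in s, f x ∂μ) := by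
  rw [lintegral_indicator hs, ofReal_integral_eq_lintegral_ofReal hf
    ((ae_restrict_iff' hs).2 (.of_forall hf_nonneg))]
  exact setLIntegral_congr_fun hs fun x hx => Real.enorm_eq_ofReal (hf_nonneg x hx)

theorem lintegral_indicator_enorm_sq_eq_ofReal_integral {α : Type*} [MeasurableSpace α]
    {μ : Measure α} {s : Set α} (hs : MeasurableSet s) {f : α → ℝ}
    (hf : IntegrableOn (fun x => f x ^ 2) s μ) :
    ∫⁻ x, s.indicator (‖f ·‖ₑ) x ^ 2 ∂μ = ENNReal.ofReal (∫ x in s, f x ^ 2 ∂μ) := by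
  rw [← lintegral_indicator_enorm_eq_ofReal_integral hs (fun x _ => sq_nonneg (f x)) hf]
  refine lintegral_congr fun x => ?_
  by_cases hx : x ∈ s <;> simp [hx, enorm_pow]

theorem integral_sq_convolution_le {T : ℝ} {v F w : ℝ → ℝ}
    (hv_nonneg : ∀ t ∈ Ioc 0 T, 0 ≤ v t) (hv_int : IntegrableOn v (Ioc 0 T))
    (hF_L2 : IntegrableOn (fun t => F t ^ 2) (Ioc 0 T))
    (hw : ∀ t ∈ Ioc 0 T, w t = ∫ τ in 0..t, v (t - τ) * F τ) :
    ∫ t in Ioc 0 T, w t ^ 2 ≤ (∫ t in Ioc 0 T, v t) ^ 2 * ∫ t in Ioc 0 T, F t ^ 2 := by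
  set φ := (Ioc 0 T).indicator (‖v ·‖ₑ)
  set ψ := (Ioc 0 T).indicator (‖F ·‖ₑ)
  have hφ : AEMeasurable φ :=
    (aemeasurable_indicator_iff measurableSet_Ioc).2 hv_int.aemeasurable.enorm
  have hψ : AEMeasurable ψ := by
    refine (aemeasurable_indicator_iff measurableSet_Ioc).2 ?_
    have hF_abs : (‖F ·‖ₑ) = fun t => ENNReal.ofReal √(F t ^ 2) := by
      ext t; rw [Real.sqrt_sq_eq_abs, Real.enorm_eq_ofReal_abs]
    rw [hF_abs]
    exact hF_L2.aemeasurable.sqrt.ennreal_ofReal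
  rw [← ENNReal.ofReal_le_ofReal_iff (by positivity)]
  calc ENNReal.ofReal (∫ t in Ioc 0 T, w t ^ 2)
      = ‖∫ t in Ioc 0 T, w t ^ 2‖ₑ :=
        (Real.enorm_eq_ofReal (setIntegral_nonneg measurableSet_Ioc fun t _ => sq_nonneg _)).symm
    _ ≤ ∫⁻ t in Ioc 0 T, ‖w t‖ₑ ^ 2 :=
        (enorm_integral_le_lintegral_enorm _).trans_eq (by simp only [enorm_pow])
    _ ≤ ∫⁻ t in Ioc 0 T, (∫⁻ τ, φ (t - τ) * ψ τ) ^ 2 :=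
        setLIntegral_mono' measurableSet_Ioc fun t ht => by
          rw [hw t ht]; gcongr; exact enorm_intervalIntegral_convolution_le ht v F
    _ ≤ ∫⁻ t, (∫⁻ τ, φ (t - τ) * ψ τ) ^ 2 := setLIntegral_le_lintegral _ _
    _ ≤ (∫⁻ t, φ t) ^ 2 * ∫⁻ τ, ψ τ ^ 2 := lintegral_sq_convolution_le volume hφ hψ
    _ = ENNReal.ofReal ((∫ t in Ioc 0 T, v t) ^ 2 * ∫ t in Ioc 0 T, F t ^ 2) := by
        rw [lintegral_indicator_enorm_eq_ofReal_integral measurableSet_Ioc hv_nonneg hv_int,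
          lintegral_indicator_enorm_sq_eq_ofReal_integral measurableSet_Ioc hF_L2,
          ENNReal.ofReal_mul (by positivity),
          ENNReal.ofReal_pow (setIntegral_nonneg measurableSet_Ioc hv_nonneg)]

theorem sq_mul_le_one_of_le_one_div {a b : ℝ} (ha : 0 ≤ a) (h : a ≤ 1 / b) : (b * a) ^ 2 ≤ 1 := by
  rcases le_or_gt b 0 with hb | hb
  · have ha_zero : a = 0 := le_antisymm (h.trans (one_div_nonpos.2 hb)) ha
    simp [ha_zero]
  · have hba : b * a ≤ 1 := by rwa [le_div_iff₀ hb, mul_comm] at h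
    exact pow_le_one₀ (mul_nonneg hb.le ha) hba

theorem direct_problem_regularity_general (T : ℝ)
    (lam : ℕ → ℝ)
    (v F : ℕ → ℝ → ℝ)
    (hv_nonneg : ∀ n, ∀ t ∈ Set.Ioc (0 : ℝ) T, 0 ≤ v n t)
    (hv_int : ∀ n, IntegrableOn (v n) (Set.Ioc 0 T))
    (hv_bound : ∀ n, (∫ t in Set.Ioc (0 : ℝ) T, v n t) ≤ 1 / lam n)
    (hF_L2 : ∀ n, IntegrableOn (fun t => (F n t) ^ 2) (Set.Ioc 0 T))
    (hF_sum : Summable fun n => ∫ t in Set.Ioc (0 : ℝ) T, (F n t) ^ 2)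
    (w : ℕ → ℝ → ℝ)
    (hw : ∀ n, ∀ t ∈ Set.Ioc (0 : ℝ) T, w n t = ∫ τ in (0 : ℝ)..t, v n (t - τ) * F n τ) :
    (∑' n, (lam n) ^ 2 * ∫ t in Set.Ioc (0 : ℝ) T, (w n t) ^ 2) ≤
      ∑' n, ∫ t in Set.Ioc (0 : ℝ) T, (F n t) ^ 2 := by
  have hmode (n : ℕ) : lam n ^ 2 * ∫ t in Ioc 0 T, w n t ^ 2 ≤ ∫ t in Ioc 0 T, F n t ^ 2 :=
    calc lam n ^ 2 * ∫ t in Ioc 0 T, w n t ^ 2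
        ≤ lam n ^ 2 * ((∫ t in Ioc 0 T, v n t) ^ 2 * ∫ t in Ioc 0 T, F n t ^ 2) := by
          gcongr
          exact integral_sq_convolution_le (hv_nonneg n) (hv_int n) (hF_L2 n) (hw n)
      _ = (lam n * ∫ t in Ioc 0 T, v n t) ^ 2 * ∫ t in Ioc 0 T, F n t ^ 2 := by ring
      _ ≤ ∫ t in Ioc 0 T, F n t ^ 2 :=
          mul_le_of_le_one_left (setIntegral_nonneg measurableSet_Ioc fun t _ => sq_nonneg _)
            (sq_mul_le_one_of_le_one_div (setIntegral_nonneg measurableSet_Ioc (hv_nonneg n))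
              (hv_bound n))
  have hmode_nonneg (n : ℕ) : 0 ≤ lam n ^ 2 * ∫ t in Ioc 0 T, w n t ^ 2 := by positivity
  exact Summable.tsum_le_tsum hmode (hF_sum.of_nonneg_of_le hmode_nonneg hmode) hF_sum

/-- The regularity estimate for the direct problem:
`Σ_n λ_n² ‖v_n * F_n‖²_{L²(0,T)} ≤ Σ_n ‖F_n‖²_{L²(0,T)}`. -/
theorem direct_problem_regularity (T lam₁ : ℝ) (hT : 0 < T) (hlam₁ : 0 < lam₁)
    (lam : ℕ → ℝ) (hlam : ∀ n, lam₁ ≤ lam n)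
    (v F : ℕ → ℝ → ℝ)
    (hv_nonneg : ∀ n, ∀ t ∈ Set.Ioc (0 : ℝ) T, 0 ≤ v n t)
    (hv_int : ∀ n, IntegrableOn (v n) (Set.Ioc 0 T))
    (hv_bound : ∀ n, (∫ t in Set.Ioc (0 : ℝ) T, v n t) ≤ 1 / lam n)
    (hF_meas : ∀ n, Measurable (F n))
    (hF_L2 : ∀ n, IntegrableOn (fun t => (F n t) ^ 2) (Set.Ioc 0 T))
    (hF_sum : Summable fun n => ∫ t in Set.Ioc (0 : ℝ) T, (F n t) ^ 2)
    (w : ℕ → ℝ → ℝ)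
    (hw : ∀ n, ∀ t ∈ Set.Ioc (0 : ℝ) T, w n t = ∫ τ in (0 : ℝ)..t, v n (t - τ) * F n τ) :
    (∑' n, (lam n) ^ 2 * ∫ t in Set.Ioc (0 : ℝ) T, (w n t) ^ 2) ≤
      ∑' n, ∫ t in Set.Ioc (0 : ℝ) T, (F n t) ^ 2 :=
  direct_problem_regularity_general T lam v F hv_nonneg hv_int hv_bound hF_L2 hF_sum w hw
end

section
/- Let (f_n), (h_n) be square-summable real sequences and (Q_n), (λ_n) positive reals with h_n = f_n Q_n and Q_n ≥ C/λ_n for some C > 0. If Σ λ_n² f_n² ≤ E², then Σ f_n² ≤ C^{-1} E (Σ h_n²)^{1/2}, i.e. ‖f‖ ≤ C^{-1/2} E^{1/2} ‖h‖^{1/2}. -/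
/-- Conditional stability for the inverse source problem:
if `h_n = f_n Q_n`, `Q_n ≥ C/λ_n` and `Σ λ_n² f_n² ≤ E²`, then
`Σ f_n² ≤ C⁻¹ E (Σ h_n²)^{1/2}`. -/
theorem inverse_problem_conditional_stability (lam Q f h : ℕ → ℝ) (C E : ℝ)
    (hC : 0 < C) (hE : 0 ≤ E)
    (hlam : ∀ n, 0 < lam n) (hQpos : ∀ n, 0 < Q n)
    (hQ : ∀ n, C / lam n ≤ Q n)
    (hfh : ∀ n, h n = f n * Q n)
    (hf_sum : Summable fun n => (f n) ^ 2) (hh_sum : Summable fun n => (h n) ^ 2)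
    (hlf_sum : Summable fun n => (lam n) ^ 2 * (f n) ^ 2)
    (hprior : ∑' n, (lam n) ^ 2 * (f n) ^ 2 ≤ E ^ 2) :
    ∑' n, (f n) ^ 2 ≤ C⁻¹ * E * Real.sqrt (∑' n, (h n) ^ 2) := by
  set B := ∑' n, (h n) ^ 2 with hB
  have hBnn : 0 ≤ B := tsum_nonneg fun n => sq_nonneg _
  -- key pointwise bound: f n ^ 2 / Q n ^ 2 ≤ C⁻² * lam n ^ 2 * f n ^ 2
  have hkey : ∀ n, (f n / Q n) ^ 2 ≤ C⁻¹ ^ 2 * ((lam n) ^ 2 * (f n) ^ 2) := by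
    intro n
    have hQn := hQpos n
    have hln := hlam n
    have h1 : C ≤ Q n * lam n := (div_le_iff₀ hln).mp (hQ n)
    have h3 : C ^ 2 ≤ Q n ^ 2 * lam n ^ 2 := by nlinarith
    have h2 : (f n / Q n) ^ 2 = f n ^ 2 / Q n ^ 2 := by ring
    rw [h2, div_le_iff₀ (by positivity)]
    have h4 : C⁻¹ ^ 2 * f n ^ 2 * C ^ 2 ≤ C⁻¹ ^ 2 * f n ^ 2 * (Q n ^ 2 * lam n ^ 2) :=
      mul_le_mul_of_nonneg_left h3 (by positivity)
    have h5 : C⁻¹ ^ 2 * f n ^ 2 * C ^ 2 = f n ^ 2 := by field_simp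
    nlinarith [h4, h5]
  have hA_sum : Summable fun n => (f n / Q n) ^ 2 :=
    (hlf_sum.mul_left _).of_nonneg_of_le (fun n => sq_nonneg _) hkey
  have hA_le : ∑' n, (f n / Q n) ^ 2 ≤ C⁻¹ ^ 2 * E ^ 2 := by
    calc ∑' n, (f n / Q n) ^ 2 ≤ ∑' n, C⁻¹ ^ 2 * ((lam n) ^ 2 * (f n) ^ 2) :=
          Summable.tsum_le_tsum hkey hA_sum (hlf_sum.mul_left _)
      _ = C⁻¹ ^ 2 * ∑' n, (lam n) ^ 2 * (f n) ^ 2 := tsum_mul_left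
      _ ≤ C⁻¹ ^ 2 * E ^ 2 := by
          exact mul_le_mul_of_nonneg_left hprior (by positivity)
  -- finite-sum Cauchy–Schwarz, then pass to the limit
  refine Summable.tsum_le_of_sum_le hf_sum fun s => ?_
  have hfqh : ∀ n, f n ^ 2 = (f n / Q n) * h n := by
    intro n
    have hQ0 : Q n ≠ 0 := (hQpos n).ne'
    rw [hfh]; field_simp
  have hcs := Finset.sum_mul_sq_le_sq_mul_sq s (fun n => f n / Q n) h
  have h1 : ∑ n ∈ s, (f n / Q n) ^ 2 ≤ C⁻¹ ^ 2 * E ^ 2 :=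
    le_trans (Summable.sum_le_tsum s (fun n _ => sq_nonneg _) hA_sum) hA_le
  have h2 : ∑ n ∈ s, h n ^ 2 ≤ B :=
    Summable.sum_le_tsum s (fun n _ => sq_nonneg _) hh_sum
  have h3 : (∑ n ∈ s, f n ^ 2) ^ 2 ≤ (C⁻¹ ^ 2 * E ^ 2) * B := by
    calc (∑ n ∈ s, f n ^ 2) ^ 2 = (∑ n ∈ s, (f n / Q n) * h n) ^ 2 := by
          simp_rw [hfqh]
      _ ≤ (∑ n ∈ s, (f n / Q n) ^ 2) * ∑ n ∈ s, h n ^ 2 := hcs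
      _ ≤ (C⁻¹ ^ 2 * E ^ 2) * B := by
          apply mul_le_mul h1 h2 (Finset.sum_nonneg fun n _ => sq_nonneg _) (by positivity)
  have hsnn : 0 ≤ ∑ n ∈ s, f n ^ 2 := Finset.sum_nonneg fun n _ => sq_nonneg _
  have h4 : ∑ n ∈ s, f n ^ 2 ≤ Real.sqrt ((C⁻¹ ^ 2 * E ^ 2) * B) := by
    rw [← Real.sqrt_sq hsnn]; exact Real.sqrt_le_sqrt h3
  calc ∑ n ∈ s, f n ^ 2 ≤ Real.sqrt ((C⁻¹ ^ 2 * E ^ 2) * B) := h4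
    _ = C⁻¹ * E * Real.sqrt B := by
        rw [Real.sqrt_mul (by positivity), Real.sqrt_mul (by positivity),
          Real.sqrt_sq (by positivity), Real.sqrt_sq hE]
end
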